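/- arXiv:1706.02891 — 8 statements merged into one kernel-verified Lean document; each statement's English description precedes it below -/
import Mathlib

section
/- For every fixed integer k ≥ 2, the function Δ₀(k,d) = k * c(k,d) - (k+1) * c(k+1,d) is monotone increasing in d on d > 0. -/
open Real Filter

noncomputable def f (a b : ℝ) : ℝ := Real.sqrt ((a + b - 2) / (a * b))

noncomputable def c (k d : ℝ) : ℝ := f (k + 1) 1 + (1 / k) * f (k + 1) d

noncomputable def Δ₀ (k d : ℝ) : ℝ := k * c k d - (k + 1) * c (k + 1) d

lemma key_ineq (r d : ℝ) (hr : 2 ≤ r) (hd : 0 < d) :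
    (r - 1) * (r + 2) * Real.sqrt ((r + d) / ((r + 2) * d)) ≤
      r * (r + 1) * Real.sqrt ((r + d - 1) / ((r + 1) * d)) := by
  have hc1 : (0:ℝ) ≤ (r - 1) * (r + 2) := by nlinarith
  have hc2 : (0:ℝ) ≤ r * (r + 1) := by nlinarith
  rw [← Real.sqrt_sq hc1, ← Real.sqrt_sq hc2, ← Real.sqrt_mul (sq_nonneg _),
    ← Real.sqrt_mul (sq_nonneg _)]
  apply Real.sqrt_le_sqrt
  rw [mul_div_assoc', mul_div_assoc', div_le_div_iff₀ (by positivity) (by positivity)]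
  have hP : (r - 1) ^ 2 * (r + 2) * (r + d) ≤ r ^ 2 * (r + 1) * (r + d - 1) := by nlinarith
  have h2 := mul_le_mul_of_nonneg_right hP (show (0:ℝ) ≤ (r + 1) * (r + 2) * d by positivity)
  nlinarith [h2]

set_option maxHeartbeats 1000000 in
lemma delta_eq (r : ℝ) (hr : 2 ≤ r) (d : ℝ) :
    Δ₀ r d = (r * f (r + 1) 1 - (r + 1) * f (r + 2) 1) +
      (Real.sqrt ((r + d - 1) / ((r + 1) * d)) - Real.sqrt ((r + d) / ((r + 2) * d))) := by
  have h0 : r ≠ 0 := by linarith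
  have h1 : r + 1 ≠ 0 := by linarith
  unfold Δ₀ c f
  have e1 : r + 1 + d - 2 = r + d - 1 := by ring
  have e2 : r + 1 + 1 = r + 2 := by ring
  rw [e1, e2]
  have e3 : r + 2 + d - 2 = r + d := by ring
  rw [e3]
  field_simp
  ring

set_option maxHeartbeats 1000000 in
lemma mono_key (r : ℝ) (hr : 2 ≤ r) {d₁ d₂ : ℝ} (h1 : 0 < d₁) (h12 : d₁ ≤ d₂) :
    Real.sqrt ((r + d₁ - 1) / ((r + 1) * d₁)) - Real.sqrt ((r + d₁) / ((r + 2) * d₁)) ≤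
      Real.sqrt ((r + d₂ - 1) / ((r + 1) * d₂)) - Real.sqrt ((r + d₂) / ((r + 2) * d₂)) := by
  have h2 : 0 < d₂ := lt_of_lt_of_le h1 h12
  have hA1 : (0:ℝ) ≤ (r + d₁ - 1) / ((r + 1) * d₁) := by
    apply div_nonneg <;> nlinarith
  have hA2 : (0:ℝ) ≤ (r + d₂ - 1) / ((r + 1) * d₂) := by
    apply div_nonneg <;> nlinarith
  have hB1 : (0:ℝ) ≤ (r + d₁) / ((r + 2) * d₁) := by
    apply div_nonneg <;> nlinarith
  have hB2 : (0:ℝ) ≤ (r + d₂) / ((r + 2) * d₂) := by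
    apply div_nonneg <;> nlinarith
  set sA1 := Real.sqrt ((r + d₁ - 1) / ((r + 1) * d₁)) with hsA1
  set sA2 := Real.sqrt ((r + d₂ - 1) / ((r + 1) * d₂)) with hsA2
  set sB1 := Real.sqrt ((r + d₁) / ((r + 2) * d₁)) with hsB1
  set sB2 := Real.sqrt ((r + d₂) / ((r + 2) * d₂)) with hsB2
  have pA1 : 0 < sA1 := Real.sqrt_pos.2 (by apply div_pos <;> nlinarith)
  have pA2 : 0 < sA2 := Real.sqrt_pos.2 (by apply div_pos <;> nlinarith)
  have pB1 : 0 < sB1 := Real.sqrt_pos.2 (by apply div_pos <;> nlinarith)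
  have pB2 : 0 < sB2 := Real.sqrt_pos.2 (by apply div_pos <;> nlinarith)
  have qA1 : sA1 ^ 2 = (r + d₁ - 1) / ((r + 1) * d₁) := Real.sq_sqrt hA1
  have qA2 : sA2 ^ 2 = (r + d₂ - 1) / ((r + 1) * d₂) := Real.sq_sqrt hA2
  have qB1 : sB1 ^ 2 = (r + d₁) / ((r + 2) * d₁) := Real.sq_sqrt hB1
  have qB2 : sB2 ^ 2 = (r + d₂) / ((r + 2) * d₂) := Real.sq_sqrt hB2
  have hr1 : (0:ℝ) < r + 1 := by linarith
  have hr2 : (0:ℝ) < r + 2 := by linarith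
  -- division-free identities
  have E1 : (sA1 ^ 2 - sA2 ^ 2) * ((r + 1) * (d₁ * d₂)) = (r - 1) * (d₂ - d₁) := by
    rw [qA1, qA2]; field_simp; ring
  have E2 : (sB1 ^ 2 - sB2 ^ 2) * ((r + 2) * (d₁ * d₂)) = r * (d₂ - d₁) := by
    rw [qB1, qB2]; field_simp; ring
  have K1 := key_ineq r d₁ hr h1
  have K2 := key_ineq r d₂ hr h2
  rw [← hsA1, ← hsB1] at K1
  rw [← hsA2, ← hsB2] at K2
  have KS : (r - 1) * (r + 2) * (sB1 + sB2) ≤ r * (r + 1) * (sA1 + sA2) := by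
    nlinarith [K1, K2]
  have hKd := mul_le_mul_of_nonneg_left KS (show (0:ℝ) ≤ d₂ - d₁ by linarith)
  have hM : (0:ℝ) < (sA1 + sA2) * (sB1 + sB2) * ((r + 1) * (r + 2) * (d₁ * d₂)) := by
    positivity
  have L : (sA1 - sA2) * ((sA1 + sA2) * (sB1 + sB2) * ((r + 1) * (r + 2) * (d₁ * d₂)))
      = (r - 1) * (d₂ - d₁) * ((r + 2) * (sB1 + sB2)) := by
    linear_combination ((r + 2) * (sB1 + sB2)) * E1
  have R : (sB1 - sB2) * ((sA1 + sA2) * (sB1 + sB2) * ((r + 1) * (r + 2) * (d₁ * d₂)))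
      = r * (d₂ - d₁) * ((r + 1) * (sA1 + sA2)) := by
    linear_combination ((r + 1) * (sA1 + sA2)) * E2
  have main : (sA1 - sA2) * ((sA1 + sA2) * (sB1 + sB2) * ((r + 1) * (r + 2) * (d₁ * d₂)))
      ≤ (sB1 - sB2) * ((sA1 + sA2) * (sB1 + sB2) * ((r + 1) * (r + 2) * (d₁ * d₂))) := by
    rw [L, R]; nlinarith [hKd]
  have hfin := le_of_mul_le_mul_right main hM
  linarith

theorem stmt_7 (k : ℤ) (hk : 2 ≤ k) :
    MonotoneOn (fun d : ℝ => Δ₀ (k : ℝ) d) (Set.Ioi 0) := by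
  have hr : (2:ℝ) ≤ (k : ℝ) := by exact_mod_cast hk
  intro d₁ hd₁ d₂ _ h12
  simp only [Set.mem_Ioi] at hd₁
  simp only [delta_eq (k : ℝ) hr]
  have := mono_key (k : ℝ) hr hd₁ h12
  linarith
end

section
/- For every real l ≥ 37, f(l+2, 1) - c(9, l+4) > 0, where c(9,d) = f(10,1) + (1/9)*f(10,d). -/
open Real Filter

lemma key_num : Real.sqrt (9/10) + (1/9) * Real.sqrt (49/410) < Real.sqrt (38/39) := by
  set a := Real.sqrt (38/39) with ha
  set b := Real.sqrt (9/10) with hb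
  set r := Real.sqrt (49/410) with hr
  have ha2 : a^2 = 38/39 := Real.sq_sqrt (by norm_num)
  have hb2 : b^2 = 9/10 := Real.sq_sqrt (by norm_num)
  have hr2 : r^2 = 49/410 := Real.sq_sqrt (by norm_num)
  have ha0 : 0 ≤ a := Real.sqrt_nonneg _
  have hb0 : 0 ≤ b := Real.sqrt_nonneg _
  have hr0 : 0 ≤ r := Real.sqrt_nonneg _
  have hab : a * b < 40429/43173 := by
    rw [ha, hb, ← Real.sqrt_mul (by norm_num)]
    rw [show (38:ℝ)/39 * (9/10) = 57/65 by norm_num]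
    rw [Real.sqrt_lt' (by norm_num)]
    norm_num
  have hba : b < a := by
    nlinarith [sq_nonneg (a - b), sq_nonneg (a + b)]
  nlinarith [sq_nonneg (a - b - r/9), mul_nonneg hb0 hr0, mul_nonneg ha0 hr0]

theorem stmt_10 (l : ℝ) (hl : 37 ≤ l) : 0 < f (l + 2) 1 - c 9 (l + 4) := by
  unfold c f
  have hl2 : (0:ℝ) < l + 2 := by linarith
  have hl4 : (0:ℝ) < l + 4 := by linarith
  have h1 : Real.sqrt (38/39) ≤ Real.sqrt ((l + 2 + 1 - 2) / ((l + 2) * 1)) := by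
    apply Real.sqrt_le_sqrt
    rw [div_le_div_iff₀ (by norm_num) (by nlinarith)]
    nlinarith
  have h2 : Real.sqrt ((9 + 1 + (l + 4) - 2) / ((9 + 1) * (l + 4))) ≤ Real.sqrt (49/410) := by
    apply Real.sqrt_le_sqrt
    rw [div_le_div_iff₀ (by nlinarith) (by norm_num)]
    nlinarith
  have h3 := key_num
  have h4 : Real.sqrt ((9 + 1 + 1 - 2) / ((9 + 1) * 1)) = Real.sqrt (9/10) := by norm_num
  rw [h4]
  nlinarith [h1, h2, h3]
end

section
/- For every integer k with 5 ≤ k ≤ 11 and every real d ≥ 100, f(d,1) + sqrt(1/(d*(d-2)^2)) + Δ₀(k,d) > 0. -/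
open Real Filter

set_option maxHeartbeats 1000000 in
lemma aux (k d r s v t : ℝ) (hd : 100 ≤ d) (hk : 1 ≤ k)
    (hr0 : 0 ≤ r) (hr : r ^ 2 ≤ k / (k + 1))
    (hs0 : 0 ≤ s) (hs : (k + 1) / (k + 2) ≤ s ^ 2)
    (hv0 : 0 ≤ v) (hv : (k + 100) / (100 * (k + 2)) ≤ v ^ 2)
    (ht0 : 0 ≤ t) (ht : 2 * t * v + t ^ 2 ≤ 98 / (100 * (k + 1) * (k + 2)))
    (hfin : (k + 1) * s < 99498 / 100000 + k * r + t) :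
    0 < f d 1 + Real.sqrt (1 / (d * (d - 2) ^ 2)) + Δ₀ k d := by
  have hk0 : (0:ℝ) < k := by linarith
  have hd0 : (0:ℝ) < d := by linarith
  have hkne : k ≠ 0 := ne_of_gt hk0
  have hk1ne : k + 1 ≠ 0 := by positivity
  -- unfold
  have e1 : f d 1 = Real.sqrt ((d - 1) / d) := by
    unfold f; norm_num; ring_nf
  have e2 : Δ₀ k d = k * Real.sqrt (k / (k + 1)) - (k + 1) * Real.sqrt ((k + 1) / (k + 2))
      + Real.sqrt ((k + d - 1) / ((k + 1) * d)) - Real.sqrt ((k + 1 + d - 1) / ((k + 2) * d)) := by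
    unfold Δ₀ c f
    have h1 : (k + 1 + 1 - 2) / ((k + 1) * 1) = k / (k + 1) := by field_simp; ring
    have h2 : (k + 1 + 1 + 1 - 2) / ((k + 1 + 1) * 1) = (k + 1) / (k + 2) := by
      field_simp; ring
    have h3 : (k + 1 + d - 2) / ((k + 1) * d) = (k + d - 1) / ((k + 1) * d) := by ring_nf
    have h4 : (k + 1 + 1 + d - 2) / ((k + 1 + 1) * d) = (k + 1 + d - 1) / ((k + 2) * d) := by
      ring_nf
    rw [h1, h2, h3, h4]
    field_simp
    ring
  rw [e1, e2]
  -- bound f d 1 from below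
  have hq : (99498 / 100000 : ℝ) ≤ Real.sqrt ((d - 1) / d) := by
    rw [Real.le_sqrt (by norm_num) (div_nonneg (by linarith) (by linarith))]
    rw [le_div_iff₀ hd0]
    nlinarith
  -- bound sqrt(k/(k+1)) from below
  have hrr : r ≤ Real.sqrt (k / (k + 1)) := by
    rw [Real.le_sqrt hr0 (by positivity)]; exact hr
  -- bound sqrt((k+1)/(k+2)) from above
  have hss : Real.sqrt ((k + 1) / (k + 2)) ≤ s := by
    have := Real.sqrt_le_sqrt hs
    rwa [Real.sqrt_sq hs0] at this
  -- bound Y from above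
  have hYv : Real.sqrt ((k + 1 + d - 1) / ((k + 2) * d)) ≤ v := by
    have hle : (k + 1 + d - 1) / ((k + 2) * d) ≤ v ^ 2 := by
      refine le_trans ?_ hv
      rw [div_le_div_iff₀ (by positivity) (by positivity)]
      nlinarith [mul_nonneg (by positivity : (0:ℝ) ≤ k + 2)
        (mul_nonneg hk0.le (by linarith : (0:ℝ) ≤ d - 100))]
    have := Real.sqrt_le_sqrt hle
    rwa [Real.sqrt_sq hv0] at this
  have hY0 : 0 ≤ Real.sqrt ((k + 1 + d - 1) / ((k + 2) * d)) := Real.sqrt_nonneg _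
  -- X ≥ Y + t
  have hXY : Real.sqrt ((k + 1 + d - 1) / ((k + 2) * d)) + t
      ≤ Real.sqrt ((k + d - 1) / ((k + 1) * d)) := by
    rw [Real.le_sqrt (by linarith) (div_nonneg (by linarith) (by positivity))]
    have hYsq : Real.sqrt ((k + 1 + d - 1) / ((k + 2) * d)) ^ 2 = (k + 1 + d - 1) / ((k + 2) * d) :=
      Real.sq_sqrt (div_nonneg (by linarith) (by positivity))
    have hdiff : (k + d - 1) / ((k + 1) * d) - (k + 1 + d - 1) / ((k + 2) * d)
        = (d - 2) / ((k + 1) * (k + 2) * d) := by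
      field_simp
      ring
    have hlow : 98 / (100 * (k + 1) * (k + 2)) ≤ (d - 2) / ((k + 1) * (k + 2) * d) := by
      rw [div_le_div_iff₀ (by positivity) (by positivity)]
      nlinarith [mul_nonneg (mul_nonneg (by positivity : (0:ℝ) ≤ k + 1)
        (by positivity : (0:ℝ) ≤ k + 2)) (by linarith : (0:ℝ) ≤ d - 100)]
    have h2tY : 2 * t * Real.sqrt ((k + 1 + d - 1) / ((k + 2) * d)) ≤ 2 * t * v :=
      mul_le_mul_of_nonneg_left hYv (by linarith)
    have hexp : (Real.sqrt ((k + 1 + d - 1) / ((k + 2) * d)) + t) ^ 2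
        = Real.sqrt ((k + 1 + d - 1) / ((k + 2) * d)) ^ 2
          + 2 * t * Real.sqrt ((k + 1 + d - 1) / ((k + 2) * d)) + t ^ 2 := by ring
    rw [hexp, hYsq]
    linarith
  have hsq2 : 0 ≤ Real.sqrt (1 / (d * (d - 2) ^ 2)) := Real.sqrt_nonneg _
  have h5 : k * r ≤ k * Real.sqrt (k / (k + 1)) :=
    mul_le_mul_of_nonneg_left hrr (le_of_lt hk0)
  have h6 : (k + 1) * Real.sqrt ((k + 1) / (k + 2)) ≤ (k + 1) * s :=
    mul_le_mul_of_nonneg_left hss (by linarith)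
  linarith

theorem stmt_12 (k : ℤ) (hk1 : 5 ≤ k) (hk2 : k ≤ 11) (d : ℝ) (hd : 100 ≤ d) :
    0 < f d 1 + Real.sqrt (1 / (d * (d - 2) ^ 2)) + Δ₀ (k : ℝ) d := by
  interval_cases k
  · exact aux 5 d (91287/100000) (92583/100000) (3873/10000) (1451/50000) hd
      (by norm_num) (by norm_num) (by norm_num) (by norm_num) (by norm_num)
      (by norm_num) (by norm_num) (by norm_num) (by norm_num) (by norm_num)
  · exact aux 6 d (46291/50000) (46771/50000) (36401/100000) (291/12500) hd
      (by norm_num) (by norm_num) (by norm_num) (by norm_num) (by norm_num)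
      (by norm_num) (by norm_num) (by norm_num) (by norm_num) (by norm_num)
  · exact aux 7 d (93541/100000) (94281/100000) (34481/100000) (1919/100000) hd
      (by norm_num) (by norm_num) (by norm_num) (by norm_num) (by norm_num)
      (by norm_num) (by norm_num) (by norm_num) (by norm_num) (by norm_num)
  · exact aux 8 d (2357/2500) (94869/100000) (1027/3125) (323/20000) hd
      (by norm_num) (by norm_num) (by norm_num) (by norm_num) (by norm_num)
      (by norm_num) (by norm_num) (by norm_num) (by norm_num) (by norm_num)
  · exact aux 9 d (23717/25000) (95347/100000) (31479/100000) (1383/100000) hd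
      (by norm_num) (by norm_num) (by norm_num) (by norm_num) (by norm_num)
      (by norm_num) (by norm_num) (by norm_num) (by norm_num) (by norm_num)
  · exact aux 10 d (47673/50000) (95743/100000) (30277/100000) (1201/100000) hd
      (by norm_num) (by norm_num) (by norm_num) (by norm_num) (by norm_num)
      (by norm_num) (by norm_num) (by norm_num) (by norm_num) (by norm_num)
  · exact aux 11 d (47871/50000) (96077/100000) (29221/100000) (527/50000) hd
      (by norm_num) (by norm_num) (by norm_num) (by norm_num) (by norm_num)
      (by norm_num) (by norm_num) (by norm_num) (by norm_num) (by norm_num)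
end

section
/- For every integer k ≥ 7, the quantity f(k+1,k+1) + f(k+1,k-1) - 2*f(k+1,k) + k*f(k+1,1) + (k-2)*f(k-1,1) - 2*(k-1)*f(k,1) is strictly positive. -/
set_option maxHeartbeats 1000000

open Real Filter

-- key: 2√c < √a + √b when 4c = a + b + 2x and x < √(ab)
lemma key (a b c x : ℝ) (ha : 0 ≤ a) (hb : 0 ≤ b) (hc : 0 ≤ c)
    (heq : 4 * c = a + b + 2 * x) (hx : x < Real.sqrt (a * b)) :
    2 * Real.sqrt c < Real.sqrt a + Real.sqrt b := by
  have h2 : (2 * Real.sqrt c) ^ 2 < (Real.sqrt a + Real.sqrt b) ^ 2 := by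
    have e1 : Real.sqrt a ^ 2 = a := Real.sq_sqrt ha
    have e2 : Real.sqrt b ^ 2 = b := Real.sq_sqrt hb
    have e3 : Real.sqrt c ^ 2 = c := Real.sq_sqrt hc
    have e4 : Real.sqrt a * Real.sqrt b = Real.sqrt (a * b) := (Real.sqrt_mul ha b).symm
    nlinarith [hx]
  have hnn : 0 ≤ Real.sqrt a + Real.sqrt b := by positivity
  exact lt_of_pow_lt_pow_left₀ 2 hnn h2

theorem stmt_13 (k : ℤ) (hk : 7 ≤ k) :
    0 < f ((k : ℝ) + 1) ((k : ℝ) + 1) + f ((k : ℝ) + 1) ((k : ℝ) - 1)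
        - 2 * f ((k : ℝ) + 1) (k : ℝ)
        + (k : ℝ) * f ((k : ℝ) + 1) 1 + ((k : ℝ) - 2) * f ((k : ℝ) - 1) 1
        - 2 * ((k : ℝ) - 1) * f (k : ℝ) 1 := by
  have hk7 : (7 : ℝ) ≤ (k : ℝ) := by exact_mod_cast hk
  set t : ℝ := (k : ℝ) with ht
  have h0 : (0:ℝ) < t := by linarith
  have h1 : (0:ℝ) < t - 1 := by linarith
  have h2 : (0:ℝ) < t - 2 := by linarith
  have h3 : (0:ℝ) < t + 1 := by linarith
  have h0' : t ≠ 0 := ne_of_gt h0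
  have h1' : t - 1 ≠ 0 := ne_of_gt h1
  have h3' : t + 1 ≠ 0 := ne_of_gt h3
  have h21 : (0:ℝ) < 2*t - 1 := by linarith
  -- rewrite the six f-values
  have e1 : f (t + 1) (t + 1) = Real.sqrt (2*t/(t+1)^2) := by
    unfold f; congr 1
    rw [div_eq_div_iff (by nlinarith : ((t+1)*(t+1)) ≠ 0) (by nlinarith : ((t+1)^2) ≠ 0)]; ring
  have e2 : f (t + 1) (t - 1) = Real.sqrt (2/(t+1)) := by
    unfold f; congr 1
    rw [div_eq_div_iff (by nlinarith : ((t+1)*(t-1)) ≠ 0) h3']; ring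
  have e3 : f (t + 1) t = Real.sqrt ((2*t-1)/(t*(t+1))) := by
    unfold f; congr 1
    rw [div_eq_div_iff (by nlinarith : ((t+1)*t) ≠ 0) (by nlinarith : (t*(t+1)) ≠ 0)]; ring
  have e4 : t * f (t + 1) 1 = Real.sqrt (t^3/(t+1)) := by
    unfold f
    rw [show t^3/(t+1) = t^2 * (((t+1)+1-2)/((t+1)*1)) by field_simp; ring,
      Real.sqrt_mul (sq_nonneg t), Real.sqrt_sq h0.le]
  have e5 : (t - 2) * f (t - 1) 1 = Real.sqrt ((t-2)^3/(t-1)) := by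
    unfold f
    rw [show (t-2)^3/(t-1) = (t-2)^2 * (((t-1)+1-2)/((t-1)*1)) by field_simp; ring,
      Real.sqrt_mul (sq_nonneg (t-2)), Real.sqrt_sq h2.le]
  have e6 : (t - 1) * f t 1 = Real.sqrt ((t-1)^3/t) := by
    unfold f
    rw [show (t-1)^3/t = (t-1)^2 * ((t+1-2)/(t*1)) by field_simp; ring,
      Real.sqrt_mul (sq_nonneg (t-1)), Real.sqrt_sq h1.le]
  -- part A
  have hA : 2 * Real.sqrt ((2*t-1)/(t*(t+1))) <
      Real.sqrt (2*t/(t+1)^2) + Real.sqrt (2/(t+1)) := by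
    apply key _ _ _ ((2*t^2+t-2)/(t*(t+1)^2))
      (div_nonneg (by linarith) (by positivity))
      (div_nonneg (by norm_num) h3.le)
      (div_nonneg h21.le (by nlinarith))
    · field_simp; ring
    · rw [show (2*t/(t+1)^2) * (2/(t+1)) = 4*t/(t+1)^3 by field_simp; ring]
      have hxnn : (0:ℝ) ≤ (2*t^2+t-2)/(t*(t+1)^2) := by
        apply div_nonneg (by nlinarith); positivity
      rw [show ((2*t^2+t-2)/(t*(t+1)^2)) = Real.sqrt (((2*t^2+t-2)/(t*(t+1)^2))^2) from
        (Real.sqrt_sq hxnn).symm]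
      apply Real.sqrt_lt_sqrt (sq_nonneg _)
      rw [div_pow, div_lt_div_iff₀ (by positivity) (by positivity)]
      nlinarith [pow_pos h3 3, pow_pos h0 2, sq_nonneg t, mul_pos (mul_pos h0 h0) h0,
        mul_pos (mul_pos h3 h3) h3, mul_pos (mul_pos (mul_pos h0 h0) h0) (mul_pos (mul_pos h3 h3) h3)]
  -- part B
  have hB : 2 * Real.sqrt ((t-1)^3/t) <
      Real.sqrt (t^3/(t+1)) + Real.sqrt ((t-2)^3/(t-1)) := by
    have hP : (0:ℝ) ≤ (t^5-3*t^4+t^3+2*t^2-2*t+2) := by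
      nlinarith [mul_nonneg (pow_pos h0 4).le (by linarith : (0:ℝ) ≤ t - 3),
        pow_pos h0 3, sq_nonneg t]
    have hden : (0:ℝ) < t*((t-1)*(t+1)) := mul_pos h0 (mul_pos h1 h3)
    apply key _ _ _ ((t^5-3*t^4+t^3+2*t^2-2*t+2)/(t*((t-1)*(t+1))))
      (div_nonneg (by positivity) h3.le)
      (div_nonneg (by positivity) h1.le)
      (div_nonneg (by positivity) h0.le)
    · field_simp; ring
    · rw [show (t^3/(t+1)) * ((t-2)^3/(t-1)) = t^3*(t-2)^3/((t-1)*(t+1)) by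
        field_simp]
      have hxnn : (0:ℝ) ≤ (t^5-3*t^4+t^3+2*t^2-2*t+2)/(t*((t-1)*(t+1))) :=
        div_nonneg hP hden.le
      rw [show ((t^5-3*t^4+t^3+2*t^2-2*t+2)/(t*((t-1)*(t+1)))) =
        Real.sqrt (((t^5-3*t^4+t^3+2*t^2-2*t+2)/(t*((t-1)*(t+1))))^2) from
        (Real.sqrt_sq hxnn).symm]
      apply Real.sqrt_lt_sqrt (sq_nonneg _)
      have hnum : (t^5-3*t^4+t^3+2*t^2-2*t+2)^2 < t^5*(t-2)^3*((t-1)*(t+1)) := by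
        nlinarith [pow_pos h0 5, pow_pos h0 4, pow_pos h0 3, pow_pos h0 2,
          mul_nonneg (pow_pos h0 5).le (by linarith : (0:ℝ) ≤ t - 7),
          mul_nonneg (pow_pos h0 4).le (by linarith : (0:ℝ) ≤ t - 7),
          mul_nonneg (pow_pos h0 3).le (by linarith : (0:ℝ) ≤ t - 7)]
      rw [div_pow, div_lt_div_iff₀ (pow_pos hden 2) (mul_pos h1 h3)]
      calc (t^5-3*t^4+t^3+2*t^2-2*t+2)^2 * ((t-1)*(t+1))
          < (t^5*(t-2)^3*((t-1)*(t+1))) * ((t-1)*(t+1)) := by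
            apply mul_lt_mul_of_pos_right hnum (mul_pos h1 h3)
        _ = t^3*(t-2)^3 * (t*((t-1)*(t+1)))^2 := by ring
  rw [e1, e2, e3]
  linarith [hA, hB, e4, e5, e6]
end

section
/- For every real d ≥ 120: 10*f(1,11) + f(1,d+1) - 11*f(1,12) + f(11,d+1) + (d-1)*(f(11,d+1) - f(11,d)) - f(12,d) + 0.0054 > 0. -/
open Real Filter

set_option maxHeartbeats 2000000 in
theorem stmt_15 (d : ℝ) (hd : 120 ≤ d) :
    0 < 10 * f 1 11 + f 1 (d + 1) - 11 * f 1 12 + f 11 (d + 1)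
        + (d - 1) * (f 11 (d + 1) - f 11 d) - f 12 d + 0.0054 := by
  have hd0 : (0:ℝ) < d := by linarith
  have hd1 : (0:ℝ) < d + 1 := by linarith
  -- unfold f into explicit sqrts
  have e1 : f 1 11 = Real.sqrt (10/11) := by unfold f; norm_num
  have e2 : f 1 (d+1) = Real.sqrt (d/(d+1)) := by
    unfold f; ring_nf
  have e3 : f 1 12 = Real.sqrt (11/12) := by unfold f; norm_num
  have e4 : f 11 (d+1) = Real.sqrt ((d+10)/(11*(d+1))) := by
    unfold f; ring_nf
  have e5 : f 11 d = Real.sqrt ((d+9)/(11*d)) := by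
    unfold f; ring_nf
  have e6 : f 12 d = Real.sqrt ((d+10)/(12*d)) := by
    unfold f; ring_nf
  set s0 := Real.sqrt (d/(d+1)) with hs0
  set s1 := Real.sqrt ((d+10)/(11*(d+1))) with hs1
  set s2 := Real.sqrt ((d+9)/(11*d)) with hs2
  set s3 := Real.sqrt ((d+10)/(12*d)) with hs3
  set t := Real.sqrt (1/11) with ht
  have hs1n : 0 ≤ s1 := Real.sqrt_nonneg _
  have hs2n : 0 ≤ s2 := Real.sqrt_nonneg _
  have htn : 0 ≤ t := Real.sqrt_nonneg _
  have hs1sq : s1^2 = (d+10)/(11*(d+1)) := Real.sq_sqrt (by positivity)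
  have hs2sq : s2^2 = (d+9)/(11*d) := Real.sq_sqrt (by positivity)
  have htsq : t^2 = 1/11 := Real.sq_sqrt (by norm_num)
  -- bound on the cross term s2 * t
  have hst : s2 * t ≤ (2*d+9)/(22*d) := by
    have : s2 * t = Real.sqrt ((d+9)/(11*d) * (1/11)) := by
      rw [Real.sqrt_mul (by positivity)]
    rw [this]
    rw [show ((2*d+9)/(22*d) : ℝ) = Real.sqrt (((2*d+9)/(22*d))^2) from
      (Real.sqrt_sq (by positivity)).symm]
    apply Real.sqrt_le_sqrt
    rw [div_mul_div_comm, div_pow, div_le_div_iff₀ (by positivity) (by positivity)]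
    nlinarith [hd0, sq_nonneg d]
  -- key rational inequality
  have key : (d-1)^2*((d+9)/(11*d)) + 2*(d-1)*((2*d+9)/(22*d)) + 1/11
      ≤ d^2*((d+10)/(11*(d+1))) := by
    have hid : (d-1)^2*((d+9)/(11*d)) + 2*(d-1)*((2*d+9)/(22*d)) + 1/11
        + 9/(11*(d+1)) = d^2*((d+10)/(11*(d+1))) := by
      field_simp
      ring
    have hpos : (0:ℝ) < 9/(11*(d+1)) := by positivity
    linarith
  -- squared inequality
  have h1 : ((d-1)*s2 + t)^2 ≤ (d*s1)^2 := by
    have hd1' : (0:ℝ) ≤ d - 1 := by linarith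
    nlinarith [key, hst, hs1sq, hs2sq, htsq, mul_nonneg hd1' hs2n]
  have hA : 0 ≤ (d-1)*s2 + t := by
    have : (0:ℝ) ≤ (d-1)*s2 := mul_nonneg (by linarith) hs2n
    linarith
  have hB : 0 ≤ d*s1 := mul_nonneg (le_of_lt hd0) hs1n
  have h2 : (d-1)*s2 + t ≤ d*s1 := by
    have := Real.sqrt_le_sqrt h1
    rwa [Real.sqrt_sq hA, Real.sqrt_sq hB] at this
  -- monotone bounds
  have hm0 : Real.sqrt (120/121) ≤ s0 := by
    apply Real.sqrt_le_sqrt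
    rw [div_le_div_iff₀ (by norm_num) hd1]; linarith
  have hm3 : s3 ≤ Real.sqrt (13/144) := by
    apply Real.sqrt_le_sqrt
    rw [div_le_div_iff₀ (by positivity) (by norm_num)]; linarith
  -- numeric bounds
  have hb1 : (0.95346:ℝ) ≤ Real.sqrt (10/11) := by
    have h := Real.sq_sqrt (by norm_num : (0:ℝ) ≤ 10/11)
    nlinarith [Real.sqrt_nonneg (10/11 : ℝ), h]
  have hb2 : Real.sqrt (11/12) ≤ 0.957428 := by
    have h := Real.sq_sqrt (by norm_num : (0:ℝ) ≤ 11/12)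
    nlinarith [Real.sqrt_nonneg (11/12 : ℝ), h]
  have hb3 : (0.995859:ℝ) ≤ Real.sqrt (120/121) := by
    have h := Real.sq_sqrt (by norm_num : (0:ℝ) ≤ 120/121)
    nlinarith [Real.sqrt_nonneg (120/121 : ℝ), h]
  have hb4 : (0.301511:ℝ) ≤ t := by
    have h := Real.sq_sqrt (by norm_num : (0:ℝ) ≤ (1:ℝ)/11)
    nlinarith [Real.sqrt_nonneg ((1:ℝ)/11), h]
  have hb5 : Real.sqrt (13/144) ≤ 0.300463 := by
    have h := Real.sq_sqrt (by norm_num : (0:ℝ) ≤ 13/144)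
    nlinarith [Real.sqrt_nonneg ((13:ℝ)/144), h]
  rw [e1, e2, e3, e4, e5, e6]
  have hcomb : s1 + (d-1)*(s1 - s2) = d*s1 - (d-1)*s2 := by ring
  linarith [h2, hcomb, hm0, hm3, hb1, hb2, hb3, hb4, hb5]
end

section
/- For the function c(k,d) = sqrt(1 - 1/(k+1)) + (1/k)*sqrt((k + d - 1)/((k+1)*d)): among integers k with 5 ≤ k ≤ 16, the minimum of c(k,120) is attained uniquely at k = 10. -/
open Real Filter

lemma sqrt_ub (x q : ℝ) (hq : 0 ≤ q) (h : x ≤ q^2) : Real.sqrt x ≤ q := by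
  have := Real.sqrt_le_sqrt h
  rwa [Real.sqrt_sq hq] at this

lemma sqrt_lb (x q : ℝ) (hq : 0 ≤ q) (h : q^2 ≤ x) : q ≤ Real.sqrt x := by
  have := Real.sqrt_le_sqrt h
  rwa [Real.sqrt_sq hq] at this

lemma c_ub (k d u v : ℝ) (hk : 0 < k) (hu : 0 ≤ u) (hv : 0 ≤ v)
    (h1 : (k + 1 + 1 - 2) / ((k + 1) * 1) ≤ u^2)
    (h2 : (k + 1 + d - 2) / ((k + 1) * d) ≤ v^2) :
    c k d ≤ u + (1 / k) * v := by
  unfold c f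
  have a := sqrt_ub _ _ hu h1
  have b := sqrt_ub _ _ hv h2
  have : (1 / k) * Real.sqrt ((k + 1 + d - 2) / ((k + 1) * d)) ≤ (1 / k) * v :=
    mul_le_mul_of_nonneg_left b (by positivity)
  linarith

lemma c_lb (k d u v : ℝ) (hk : 0 < k) (hu : 0 ≤ u) (hv : 0 ≤ v)
    (h1 : u^2 ≤ (k + 1 + 1 - 2) / ((k + 1) * 1))
    (h2 : v^2 ≤ (k + 1 + d - 2) / ((k + 1) * d)) :
    u + (1 / k) * v ≤ c k d := by
  unfold c f
  have a := sqrt_lb _ _ hu h1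
  have b := sqrt_lb _ _ hv h2
  have : (1 / k) * v ≤ (1 / k) * Real.sqrt ((k + 1 + d - 2) / ((k + 1) * d)) :=
    mul_le_mul_of_nonneg_left b (by positivity)
  linarith

theorem stmt_16 (k : ℤ) (hk1 : 5 ≤ k) (hk2 : k ≤ 16) (hk3 : k ≠ 10) :
    c 10 120 < c (k : ℝ) 120 := by
  have hU : c 10 120 ≤ 95346259/100000000 + (1/10) * (15630681/50000000) :=
    c_ub 10 120 _ _ (by norm_num) (by norm_num) (by norm_num) (by norm_num) (by norm_num)
  interval_cases k <;> simp_all <;> push_cast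
  · have hL := c_lb 5 120 (22821773/25000000) (8299933/20000000)
      (by norm_num) (by norm_num) (by norm_num) (by norm_num) (by norm_num)
    linarith
  · have hL := c_lb 6 120 (92582009/100000000) (38575837/100000000)
      (by norm_num) (by norm_num) (by norm_num) (by norm_num) (by norm_num)
    linarith
  · have hL := c_lb 7 120 (46770717/50000000) (36228441/100000000)
      (by norm_num) (by norm_num) (by norm_num) (by norm_num) (by norm_num)
    linarith
  · have hL := c_lb 8 120 (11785113/12500000) (535809/1562500)
      (by norm_num) (by norm_num) (by norm_num) (by norm_num) (by norm_num)
    linarith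
  · have hL := c_lb 9 120 (94868329/100000000) (32659863/100000000)
      (by norm_num) (by norm_num) (by norm_num) (by norm_num) (by norm_num)
    linarith
  · have hL := c_lb 11 120 (9574271/10000000) (1502313/5000000)
      (by norm_num) (by norm_num) (by norm_num) (by norm_num) (by norm_num)
    linarith
  · have hL := c_lb 12 120 (24019223/25000000) (28978329/100000000)
      (by norm_num) (by norm_num) (by norm_num) (by norm_num) (by norm_num)
    linarith
  · have hL := c_lb 13 120 (96362411/100000000) (5606119/20000000)
      (by norm_num) (by norm_num) (by norm_num) (by norm_num) (by norm_num)
    linarith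
  · have hL := c_lb 14 120 (48304589/50000000) (2718251/10000000)
      (by norm_num) (by norm_num) (by norm_num) (by norm_num) (by norm_num)
    linarith
  · have hL := c_lb 15 120 (96824583/100000000) (412783/1562500)
      (by norm_num) (by norm_num) (by norm_num) (by norm_num) (by norm_num)
    linarith
  · have hL := c_lb 16 120 (388057/400000) (25724787/100000000)
      (by norm_num) (by norm_num) (by norm_num) (by norm_num) (by norm_num)
    linarith
end

section
/- For all integers p ≥ 1000 and r with 8 ≤ r ≤ 9: 10*(p-r)*c(10,p) + 11*r*c(11,p) > 10*(p+r-9)*c(10,p+1) + 9*(10-r)*c(9,p+1). -/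
open Real Filter

private lemma auxP8 (x : ℝ) (hx : (1000:ℝ) ≤ x) :
    (0:ℝ) < 4143004104139035291*x^2 - 1376135607523798464709*x
      - 159302330856585437500000 := by
  nlinarith [sq_nonneg (x-1000), hx]

private lemma auxP9 (x : ℝ) (hx : (1000:ℝ) ≤ x) :
    (0:ℝ) < 6154348438211503679*x^2 - 660651006595725996321*x
      - 89136975840845187500000 := by
  nlinarith [sq_nonneg (x-1000), hx]

private lemma auxT8 (x s2 s3 s4 : ℝ) (hx : (1000:ℝ) ≤ x)
    (m2 : s2*((x+1)*((12531427/6250000)*x+10)) ≤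
      (628004080580337/1038812500000000)*x^2 + (6579720843080337/1038812500000000)*x
        + 275114331/16621000)
    (m3 : (1447/2500)*x^2 + (15917/2500)*x + 1447/250 ≤
      s3*((x+1)*((12531427/6250000)*x+10)))
    (m4 : s4*((x+1)*((12531427/6250000)*x+10)) ≤
      (251161890064547/396125000000000)*x^2 + (2506336112564547/396125000000000)*x
        + 100042561/6338000) :
    (0:ℝ) < (2174517/5000000) - 7*s2 + 8*s3 - 2*s4 := by
  have hD : (0:ℝ) < (x+1)*((12531427/6250000)*x+10) := by nlinarith
  have hP := auxP8 x hx
  have hprod : (0:ℝ) < ((2174517/5000000) - 7*s2 + 8*s3 - 2*s4) *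
      ((x+1)*((12531427/6250000)*x+10)) := by nlinarith [hP, m2, m3, m4]
  nlinarith [hprod, hD]

private lemma auxT9 (x s2 s3 s4 : ℝ) (hx : (1000:ℝ) ≤ x)
    (m2 : s2*((x+1)*((12531427/6250000)*x+10)) ≤
      (628004080580337/1038812500000000)*x^2 + (6579720843080337/1038812500000000)*x
        + 275114331/16621000)
    (m3 : (1447/2500)*x^2 + (15917/2500)*x + 1447/250 ≤
      s3*((x+1)*((12531427/6250000)*x+10)))
    (m4 : s4*((x+1)*((12531427/6250000)*x+10)) ≤
      (251161890064547/396125000000000)*x^2 + (2506336112564547/396125000000000)*x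
        + 100042561/6338000) :
    (0:ℝ) < (272187/625000) - 9*s2 + 9*s3 - 1*s4 := by
  have hD : (0:ℝ) < (x+1)*((12531427/6250000)*x+10) := by nlinarith
  have hP := auxP9 x hx
  have hprod : (0:ℝ) < ((272187/625000) - 9*s2 + 9*s3 - 1*s4) *
      ((x+1)*((12531427/6250000)*x+10)) := by nlinarith [hP, m2, m3, m4]
  nlinarith [hprod, hD]

private lemma auxFin8 (x s1 s2 s3 s4 A B G : ℝ)
    (hA : A ≤ 9534626/10000000) (hB : (9574271/10000000:ℝ) ≤ B)
    (hG : G ≤ 9486833/10000000) (hx : (1000:ℝ) ≤ x) (hs12 : s2 ≤ s1)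
    (hT : (0:ℝ) < (2174517/5000000) - 7*s2 + 8*s3 - 2*s4) :
    10 * (x - 8) * (A + (1/10)*s1) + 11 * 8 * (B + (1/11)*s3) >
    10 * (x + 8 - 9) * (A + (1/10)*s2) + 9 * (10 - 8) * (G + (1/9)*s4) := by
  nlinarith [hT, hA, hB, hG, mul_nonneg (by linarith : (0:ℝ) ≤ x-8) (sub_nonneg.2 hs12)]

private lemma auxFin9 (x s1 s2 s3 s4 A B G : ℝ)
    (hA : A ≤ 9534626/10000000) (hB : (9574271/10000000:ℝ) ≤ B)
    (hG : G ≤ 9486833/10000000) (hx : (1000:ℝ) ≤ x) (hs12 : s2 ≤ s1)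
    (hT : (0:ℝ) < (272187/625000) - 9*s2 + 9*s3 - 1*s4) :
    10 * (x - 9) * (A + (1/10)*s1) + 11 * 9 * (B + (1/11)*s3) >
    10 * (x + 9 - 9) * (A + (1/10)*s2) + 9 * (10 - 9) * (G + (1/9)*s4) := by
  nlinarith [hT, hA, hB, hG, mul_nonneg (by linarith : (0:ℝ) ≤ x-9) (sub_nonneg.2 hs12)]

set_option maxHeartbeats 1000000 in
theorem stmt_18 (p r : ℤ) (hp : 1000 ≤ p) (hr1 : 8 ≤ r) (hr2 : r ≤ 9) :
    10 * ((p : ℝ) - (r : ℝ)) * c 10 (p : ℝ) + 11 * (r : ℝ) * c 11 (p : ℝ) >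
    10 * ((p : ℝ) + (r : ℝ) - 9) * c 10 ((p : ℝ) + 1)
      + 9 * (10 - (r : ℝ)) * c 9 ((p : ℝ) + 1) := by
  have hx : (1000:ℝ) ≤ (p:ℝ) := by exact_mod_cast hp
  set x : ℝ := (p:ℝ) with hxdef
  have e10 : c 10 x = Real.sqrt (10/11) + (1/10) * Real.sqrt ((x+9)/(11*x)) := by
    unfold c f; norm_num; ring_nf
  have e11 : c 11 x = Real.sqrt (11/12) + (1/11) * Real.sqrt ((x+10)/(12*x)) := by
    unfold c f; norm_num; ring_nf
  have e10' : c 10 (x+1) = Real.sqrt (10/11) + (1/10) * Real.sqrt ((x+10)/(11*(x+1))) := by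
    unfold c f; norm_num; ring_nf
  have e9 : c 9 (x+1) = Real.sqrt (9/10) + (1/9) * Real.sqrt ((x+9)/(10*(x+1))) := by
    unfold c f; norm_num; ring_nf
  rw [e10, e11, e10', e9]
  have hx0 : (0:ℝ) < x := by linarith
  have hx1 : (0:ℝ) < x + 1 := by linarith
  set A := Real.sqrt (10/11) with hAdef
  set B := Real.sqrt (11/12) with hBdef
  set G := Real.sqrt (9/10) with hGdef
  set s1 := Real.sqrt ((x+9)/(11*x)) with hs1def
  set s2 := Real.sqrt ((x+10)/(11*(x+1))) with hs2def
  set s3 := Real.sqrt ((x+10)/(12*x)) with hs3def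
  set s4 := Real.sqrt ((x+9)/(10*(x+1))) with hs4def
  have hA : A ≤ 9534626/10000000 := by
    rw [hAdef, show (9534626/10000000 : ℝ) = Real.sqrt ((9534626/10000000)^2) by
      rw [Real.sqrt_sq (by norm_num)]]
    exact Real.sqrt_le_sqrt (by norm_num)
  have hB : (9574271/10000000 : ℝ) ≤ B := by
    rw [hBdef, show (9574271/10000000 : ℝ) = Real.sqrt ((9574271/10000000)^2) by
      rw [Real.sqrt_sq (by norm_num)]]
    exact Real.sqrt_le_sqrt (by norm_num)
  have hG : G ≤ 9486833/10000000 := by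
    rw [hGdef, show (9486833/10000000 : ℝ) = Real.sqrt ((9486833/10000000)^2) by
      rw [Real.sqrt_sq (by norm_num)]]
    exact Real.sqrt_le_sqrt (by norm_num)
  have hs12 : s2 ≤ s1 := by
    rw [hs1def, hs2def]
    apply Real.sqrt_le_sqrt
    rw [div_le_div_iff₀ (by linarith) (by linarith)]
    nlinarith
  have hs3nn : 0 ≤ s3 := Real.sqrt_nonneg _
  have hs2sq : 11*(x+1)*s2^2 = x+10 := by
    rw [hs2def, Real.sq_sqrt (by positivity)]; field_simp
  have hs3sq : 12*x*s3^2 = x+10 := by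
    rw [hs3def, Real.sq_sqrt (by positivity)]; field_simp
  have hs4sq : 10*(x+1)*s4^2 = x+9 := by
    rw [hs4def, Real.sq_sqrt (by positivity)]; field_simp
  have hs2c : 22*(3022/10000)*(s2*(x+1)) ≤ (x+10) + 11*(3022/10000)^2*(x+1) := by
    nlinarith [mul_nonneg hx1.le (sq_nonneg (s2 - 3022/10000)), hs2sq]
  have hs4c : 20*(3169/10000)*(s4*(x+1)) ≤ (x+9) + 10*(3169/10000)^2*(x+1) := by
    nlinarith [mul_nonneg hx1.le (sq_nonneg (s4 - 3169/10000)), hs4sq]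
  have hcube : 12*x*s3^3 = s3*(12*x*s3^2) := by ring
  rw [hs3sq] at hcube
  have hs3c : 2*(2894/10000)*(x+10) ≤ s3*((12531427/6250000)*x+10) := by
    nlinarith [mul_nonneg (mul_nonneg hx0.le hs3nn) (sq_nonneg (s3 - 2894/10000)),
      hcube, hs3sq]
  have hg : (0:ℝ) < (12531427/6250000)*x+10 := by nlinarith
  have m2 : s2*((x+1)*((12531427/6250000)*x+10)) ≤
      (628004080580337/1038812500000000)*x^2 + (6579720843080337/1038812500000000)*x
        + 275114331/16621000 := by
    nlinarith [mul_le_mul_of_nonneg_right hs2c hg.le]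
  have m4 : s4*((x+1)*((12531427/6250000)*x+10)) ≤
      (251161890064547/396125000000000)*x^2 + (2506336112564547/396125000000000)*x
        + 100042561/6338000 := by
    nlinarith [mul_le_mul_of_nonneg_right hs4c hg.le]
  have m3 : (1447/2500)*x^2 + (15917/2500)*x + 1447/250 ≤
      s3*((x+1)*((12531427/6250000)*x+10)) := by
    nlinarith [mul_le_mul_of_nonneg_right hs3c hx1.le]
  interval_cases r
  · push_cast
    exact auxFin8 x s1 s2 s3 s4 A B G hA hB hG hx hs12 (auxT8 x s2 s3 s4 hx m2 m3 m4)
  · push_cast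
    exact auxFin9 x s1 s2 s3 s4 A B G hA hB hG hx hs12 (auxT9 x s2 s3 s4 hx m2 m3 m4)
end

section
/- As t → ∞ with t = 10p (so r = 0), the ABC-index of the tree T_t consisting of a root joined to p stars each of order 10 satisfies abc(T_t) = 10*p*c(10,p) = (sqrt(10/11) + (1/10)*sqrt(1/11))*t + (9/2)*sqrt(1/11) + O(1/t). -/
open Real Filter

theorem stmt_19 :
    ∃ C > 0, ∃ N : ℕ, ∀ p : ℕ, N ≤ p →
      |10 * (p : ℝ) * c 10 (p : ℝ)
        - (Real.sqrt (10 / 11) + (1 / 10) * Real.sqrt (1 / 11)) * (10 * (p : ℝ))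
        - (9 / 2) * Real.sqrt (1 / 11)| ≤ C / (p : ℝ) := by
  refine ⟨8, by norm_num, 1, fun p hp => ?_⟩
  have hp1 : (1:ℝ) ≤ (p:ℝ) := by exact_mod_cast hp
  have hp0 : (0:ℝ) < (p:ℝ) := by linarith
  set x : ℝ := (p:ℝ) with hxdef
  set a : ℝ := Real.sqrt (x*(x+9)/11) with hadef
  set b : ℝ := (x + 9/2) * Real.sqrt (1/11) with hbdef
  have ha0 : 0 ≤ a := Real.sqrt_nonneg _
  have hs0 : 0 ≤ Real.sqrt (1/11) := Real.sqrt_nonneg _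
  have hb0 : 0 ≤ b := by
    apply mul_nonneg _ hs0; linarith
  have ha2 : a^2 = x*(x+9)/11 := Real.sq_sqrt (by positivity)
  have hs2 : (Real.sqrt (1/11))^2 = 1/11 := Real.sq_sqrt (by norm_num)
  have hb2 : b^2 = (x + 9/2)^2 / 11 := by
    rw [hbdef, mul_pow, hs2]; ring
  have hs4 : (1:ℝ)/4 ≤ Real.sqrt (1/11) := by
    nlinarith [hs2, hs0]
  -- rewrite the expression
  have hf1 : f (10 + 1) 1 = Real.sqrt (10/11) := by
    unfold f; norm_num
  have hf2 : x * f (10 + 1) x = a := by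
    unfold f
    rw [hadef]
    have h1 : x*(x+9)/11 = x^2 * ((10 + 1 + x - 2) / ((10+1)*x)) := by
      field_simp; ring
    rw [h1, Real.sqrt_mul (by positivity), Real.sqrt_sq hp0.le]
  have key : 10 * x * c 10 x
      - (Real.sqrt (10 / 11) + (1 / 10) * Real.sqrt (1 / 11)) * (10 * x)
      - (9 / 2) * Real.sqrt (1 / 11) = a - b := by
    unfold c
    rw [hf1]
    have : 10 * x * (Real.sqrt (10/11) + 1/10 * f (10+1) x)
        = 10 * x * Real.sqrt (10/11) + x * f (10+1) x := by ring
    rw [this, hf2, hbdef]; ring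
  rw [key]
  have hab : a ≤ b := by
    have h1 : x*(x+9)/11 ≤ (x+9/2)^2/11 := by nlinarith
    calc a ≤ Real.sqrt ((x+9/2)^2/11) := Real.sqrt_le_sqrt h1
      _ = b := by
        rw [hbdef, show (x+9/2)^2/11 = (x+9/2)^2 * (1/11) by ring,
          Real.sqrt_mul (by positivity), Real.sqrt_sq (by linarith)]
  rw [abs_sub_comm, abs_of_nonneg (by linarith)]
  rw [le_div_iff₀ hp0]
  have hdiff : b^2 - a^2 = 81/44 := by rw [hb2, ha2]; ring
  have hba : x/4 ≤ b + a := by nlinarith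
  nlinarith [hdiff, hba, hab, hp1, mul_nonneg (sub_nonneg.2 hab) hp0.le]
end
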